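/- Let F be a subfield of ℂ and let b ∈ F. Then every complex root x of the ninth-degree equation (x³ + x + b)³ + x³ + 2b = 0 is solvable by radicals over F, i.e. x lies in the subfield solvableByRad F ℂ of elements of ℂ obtainable from F by field operations and extraction of n-th roots. -/

import Mathlib

/-!
The equation factors as `(x³ + b) · P(x) = 0` with
`P(x) = x⁶ + 3x⁴ + 2bx³ + 3x² + 3bx + b² + 2`. A root of `x³ + b` is a cube root of `-b`.
For a root `x` of `P`, the symmetric function `s = x³ + 2x + b` satisfies the cubic
`s³ + 3s - b = 0`, solvable by Cardano's formula, and then `x` is a root of the quadratic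
`x² - sx + (s² + 2)` whose coefficients are radical expressions in `b`.
-/

namespace solvableByRad

variable {F E : Type*} [Field F] [Field E] [Algebra F E]

theorem mem_of_quadratic [NeZero (2 : E)] {x p q : E} (hx : x ^ 2 + p * x + q = 0)
    (hp : p ∈ solvableByRad F E) (hq : q ∈ solvableByRad F E) :
    x ∈ solvableByRad F E := by
  have hdisc : (2 * x + p) ^ 2 ∈ solvableByRad F E := by
    rw [show (2 * x + p) ^ 2 = p ^ 2 - 4 * q by linear_combination 4 * hx]
    exact sub_mem (pow_mem hp 2) (mul_mem (ofNat_mem _ 4) hq)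
  have hroot := sub_mem (rad_mem two_ne_zero hdisc) hp
  rw [show x = (2 * x + p - p) / 2 by field_simp; ring]
  exact div_mem hroot (ofNat_mem _ 2)

/-- The witnesses: `u` is a cube root of a root `w` of the resolvent `w² + qw - p³/27` and
`v = -p/(3u)`, so `u³v³ = -p³/27` and Vieta's formula gives `u³ + v³ = -q`. -/
theorem exists_cardano_pair [IsAlgClosed E] [CharZero E] {p q : E} (hp0 : p ≠ 0)
    (hp : p ∈ solvableByRad F E) (hq : q ∈ solvableByRad F E) :
    ∃ u ∈ solvableByRad F E, ∃ v ∈ solvableByRad F E, 3 * u * v = -p ∧ u ^ 3 + v ^ 3 = -q := by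
  obtain ⟨r, hr⟩ := IsAlgClosed.exists_pow_nat_eq (q ^ 2 + 4 * p ^ 3 / 27) two_pos
  set w := (-q + r) / 2
  have hw : w ^ 2 + q * w + -(p ^ 3 / 27) = 0 := by linear_combination hr / 4
  have hwS : w ∈ solvableByRad F E :=
    mem_of_quadratic hw hq (neg_mem (div_mem (pow_mem hp 3) (ofNat_mem _ 27)))
  obtain ⟨u, hu⟩ := IsAlgClosed.exists_pow_nat_eq w three_pos
  have hu0 : u ≠ 0 := by
    rintro rfl
    apply hp0
    apply pow_eq_zero_iff three_ne_zero |>.mp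
    linear_combination -27 * hw - 27 * (w + q) * hu
  have huS : u ∈ solvableByRad F E := rad_mem three_ne_zero (hu ▸ hwS)
  set v := -p / (3 * u)
  have huv : 3 * u * v = -p := by
    simp only [v]
    field_simp
  have hcubes : u ^ 3 * (u ^ 3 + v ^ 3 + q) = 0 := by
    linear_combination hw + (u ^ 3 + w + q) * hu
      + ((3 * u * v) ^ 2 - 3 * u * v * p + p ^ 2) / 27 * huv
  refine ⟨u, huS, v, div_mem (neg_mem hp) (mul_mem (ofNat_mem _ 3) huS), huv, ?_⟩
  linear_combination (mul_eq_zero.1 hcubes).resolve_left (pow_ne_zero 3 hu0)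

theorem mem_of_depressed_cubic [IsAlgClosed E] [CharZero E] {z p q : E}
    (hz : z ^ 3 + p * z + q = 0)
    (hp : p ∈ solvableByRad F E) (hq : q ∈ solvableByRad F E) :
    z ∈ solvableByRad F E := by
  rcases eq_or_ne p 0 with rfl | hp0
  · refine rad_mem three_ne_zero ?_
    rw [show z ^ 3 = -q by linear_combination hz]
    exact neg_mem hq
  obtain ⟨u, huS, v, hvS, huv, hsum⟩ := exists_cardano_pair hp0 hp hq
  have hfactor : (z - (u + v)) * (z ^ 2 + (u + v) * z + (u ^ 2 - u * v + v ^ 2)) = 0 := by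
    linear_combination hz - z * huv - hsum
  rcases mul_eq_zero.1 hfactor with hlin | hquad
  · rw [sub_eq_zero.1 hlin]
    exact add_mem huS hvS
  · exact mem_of_quadratic hquad (add_mem huS hvS)
      (add_mem (sub_mem (pow_mem huS 2) (mul_mem huS hvS)) (pow_mem hvS 2))

end solvableByRad

theorem stmt_19 (F : Subfield ℂ) (b : ℂ) (hb : b ∈ F) (x : ℂ)
    (hx : (x ^ 3 + x + b) ^ 3 + x ^ 3 + 2 * b = 0) :
    x ∈ solvableByRad F ℂ := by
  have hbS : b ∈ solvableByRad F ℂ := (solvableByRad F ℂ).algebraMap_mem ⟨b, hb⟩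
  have hfactor : (x ^ 3 + b) *
      (x ^ 6 + 3 * x ^ 4 + 2 * b * x ^ 3 + 3 * x ^ 2 + 3 * b * x + b ^ 2 + 2) = 0 := by
    linear_combination hx
  rcases mul_eq_zero.1 hfactor with hcube | hsextic
  · exact solvableByRad.rad_mem three_ne_zero
      (by rw [eq_neg_of_add_eq_zero_left hcube]; exact neg_mem hbS)
  · have hs : x ^ 3 + 2 * x + b ∈ solvableByRad F ℂ :=
      solvableByRad.mem_of_depressed_cubic (p := 3) (q := -b)
        (by linear_combination (x ^ 3 + 3 * x + b) * hsextic)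
        (ofNat_mem _ 3) (neg_mem hbS)
    exact solvableByRad.mem_of_quadratic (p := -(x ^ 3 + 2 * x + b))
      (q := (x ^ 3 + 2 * x + b) ^ 2 + 2) (by linear_combination hsextic)
      (neg_mem hs) (add_mem (pow_mem hs 2) (ofNat_mem _ 2))
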